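/- arXiv:1305.5826 — 5 statements merged into one kernel-verified Lean document; each statement's English description precedes it below -/
import Mathlib

section
/- For every block index m, Γ_{U_m D} (Γ_{DD} + Λ)^{-1} = Σ_{U_m S} Σ̈_{SS}^{-1} Σ_{SD} Λ^{-1}, where Γ_{U_m D} is the block row with blocks Γ_{U_m D_1},…,Γ_{U_m D_M} and Γ_{DD} + Λ is assumed invertible. -/
/-!
Write `A` for the block row `Σ_{SD}`. Then `Γ_{DD} = Aᵀ Σ_{SS}⁻¹ A` and `Γ_{U_m D} = Σ_{U_m S} Σ_{SS}⁻¹ A`,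
and since `Λ` is block diagonal, `Σ̈_{SS} = Σ_{SS} + A Λ⁻¹ Aᵀ`. The claim is thus the push-through
identity `Σ_{SS}⁻¹ A (Aᵀ Σ_{SS}⁻¹ A + Λ)⁻¹ = Σ̈_{SS}⁻¹ A Λ⁻¹`, which is a rearrangement of
`Σ̈_{SS} Σ_{SS}⁻¹ A = A + A Λ⁻¹ Aᵀ Σ_{SS}⁻¹ A = A Λ⁻¹ (Aᵀ Σ_{SS}⁻¹ A + Λ)`.
-/

open Matrix

namespace Matrix

section PushThrough

variable {n m R : Type*} [Fintype n] [DecidableEq n] [Fintype m] [DecidableEq m] [CommRing R]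

theorem add_mul_inv_mul_mul_inv_mul (K : Matrix n n R) (Λ : Matrix m m R) (A : Matrix n m R)
    (B : Matrix m n R) (hK : IsUnit K.det) (hΛ : IsUnit Λ.det) :
    (K + A * Λ⁻¹ * B) * (K⁻¹ * A) = A * Λ⁻¹ * (B * K⁻¹ * A + Λ) := by
  rw [Matrix.add_mul, Matrix.mul_add, mul_nonsing_inv_cancel_left _ _ hK,
    nonsing_inv_mul_cancel_right _ _ hΛ, add_comm]
  simp only [Matrix.mul_assoc]

theorem inv_mul_mul_inv_add_eq (K : Matrix n n R) (Λ : Matrix m m R) (A : Matrix n m R)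
    (B : Matrix m n R) (hK : IsUnit K.det) (hΛ : IsUnit Λ.det)
    (hKΛ : IsUnit (K + A * Λ⁻¹ * B).det) (hΛK : IsUnit (B * K⁻¹ * A + Λ).det) :
    K⁻¹ * A * (B * K⁻¹ * A + Λ)⁻¹ = (K + A * Λ⁻¹ * B)⁻¹ * A * Λ⁻¹ :=
  calc K⁻¹ * A * (B * K⁻¹ * A + Λ)⁻¹
      = (K + A * Λ⁻¹ * B)⁻¹ * ((K + A * Λ⁻¹ * B) * (K⁻¹ * A)) *
          (B * K⁻¹ * A + Λ)⁻¹ := by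
        rw [nonsing_inv_mul_cancel_left _ _ hKΛ, Matrix.mul_assoc]
    _ = (K + A * Λ⁻¹ * B)⁻¹ * A * Λ⁻¹ := by
        rw [add_mul_inv_mul_mul_inv_mul K Λ A B hK hΛ, ← Matrix.mul_assoc,
          mul_nonsing_inv_cancel_right _ _ hΛK, Matrix.mul_assoc, Matrix.mul_assoc]

end PushThrough

section BlockDiagonal

variable {ι R : Type*} [Fintype ι] [DecidableEq ι] [CommRing R]
  {d : ι → Type*} [∀ i, Fintype (d i)] [∀ i, DecidableEq (d i)]

theorem blockDiagonal'_mul_blockDiagonal'_inv (Q : ∀ i, Matrix (d i) (d i) R)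
    (hQ : ∀ i, IsUnit (Q i).det) :
    blockDiagonal' Q * blockDiagonal' (fun i => (Q i)⁻¹) = 1 := by
  rw [← blockDiagonal'_mul, ← blockDiagonal'_one]
  exact congrArg blockDiagonal' (funext fun i => mul_nonsing_inv _ (hQ i))

theorem isUnit_det_blockDiagonal' (Q : ∀ i, Matrix (d i) (d i) R) (hQ : ∀ i, IsUnit (Q i).det) :
    IsUnit (blockDiagonal' Q).det :=
  isUnit_det_of_right_inverse (blockDiagonal'_mul_blockDiagonal'_inv Q hQ)

theorem inv_blockDiagonal' (Q : ∀ i, Matrix (d i) (d i) R) (hQ : ∀ i, IsUnit (Q i).det) :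
    (blockDiagonal' Q)⁻¹ = blockDiagonal' fun i => (Q i)⁻¹ :=
  inv_eq_right_inv (blockDiagonal'_mul_blockDiagonal'_inv Q hQ)

end BlockDiagonal

section BlockRow

variable {ι R s : Type*} [NonUnitalNonAssocSemiring R] {d : ι → Type*}

theorem mul_of_sigma {u : Type*} [Fintype s] (X : Matrix u s R) (A : ∀ i, Matrix s (d i) R) :
    X * of (fun a (j : Σ i, d i) => A j.1 a j.2) =
      of fun a (j : Σ i, d i) => (X * A j.1) a j.2 := by
  ext a j
  simp only [mul_apply, of_apply]

theorem of_sigma_mul_blockDiagonal' [Fintype ι] [DecidableEq ι] [∀ i, Fintype (d i)]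
    (A : ∀ i, Matrix s (d i) R) (P : ∀ i, Matrix (d i) (d i) R) :
    of (fun a (j : Σ i, d i) => A j.1 a j.2) * blockDiagonal' P =
      of fun a (j : Σ i, d i) => (A j.1 * P j.1) a j.2 := by
  ext a ⟨i, y⟩
  simp only [mul_apply, of_apply, ← Finset.univ_sigma_univ, Finset.sum_sigma]
  rw [Finset.sum_eq_single i]
  · simp only [blockDiagonal'_apply_eq]
  · intro k _ hk
    exact Finset.sum_eq_zero fun x _ => by rw [blockDiagonal'_apply_ne _ _ _ hk, mul_zero]
  · simp

theorem of_sigma_mul_transpose_of_sigma {t : Type*} [Fintype ι] [∀ i, Fintype (d i)]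
    (A : ∀ i, Matrix s (d i) R) (B : ∀ i, Matrix t (d i) R) :
    of (fun a (j : Σ i, d i) => A j.1 a j.2) * (of fun b (j : Σ i, d i) => B j.1 b j.2)ᵀ =
      ∑ i, A i * (B i)ᵀ := by
  ext a b
  simp only [mul_apply, of_apply, transpose_apply, sum_apply, ← Finset.univ_sigma_univ,
    Finset.sum_sigma]

end BlockRow

end Matrix

theorem stmt_3_general
    {M : ℕ}
    {S : Type} [Fintype S] [DecidableEq S]
    {D : Fin M → Type} [∀ m, Fintype (D m)] [∀ m, DecidableEq (D m)]
    (KSS : Matrix S S ℝ) (hKSSinv : IsUnit KSS.det)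
    (KSD : ∀ m, Matrix S (D m) ℝ)
    (Q : ∀ m, Matrix (D m) (D m) ℝ)
    (hQinv : ∀ m, IsUnit (Q m).det)
    (Λ : Matrix ((m : Fin M) × D m) ((m : Fin M) × D m) ℝ)
    (hΛ : Λ = Matrix.blockDiagonal' Q)
    (KSDf : Matrix S ((m : Fin M) × D m) ℝ)
    (hKSDf : KSDf = Matrix.of fun s d => KSD d.1 s d.2)
    (Kdd : Matrix S S ℝ)
    (hKdd : Kdd = KSS + ∑ m, KSD m * (Q m)⁻¹ * (KSD m)ᵀ)
    (hKddinv : IsUnit Kdd.det)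
    {U : Fin M → Type}
    (KUS : ∀ m, Matrix (U m) S ℝ)
    (ΓDD : Matrix ((m : Fin M) × D m) ((m : Fin M) × D m) ℝ)
    (hΓDD : ΓDD = KSDfᵀ * KSS⁻¹ * KSDf)
    (Γrow : ∀ m, Matrix (U m) ((k : Fin M) × D k) ℝ)
    (hΓrow : ∀ m, Γrow m = Matrix.of fun u d => (KUS m * KSS⁻¹ * KSD d.1) u d.2)
    (hGLinv : IsUnit (ΓDD + Λ).det)
    :
    ∀ m, Γrow m * (ΓDD + Λ)⁻¹ = KUS m * Kdd⁻¹ * KSDf * Λ⁻¹ := by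
  intro m
  have hΛinv : IsUnit Λ.det := hΛ ▸ isUnit_det_blockDiagonal' Q hQinv
  have hΓrow' : Γrow m = KUS m * KSS⁻¹ * KSDf := by
    rw [hΓrow, hKSDf, mul_of_sigma]
  have hKdd' : Kdd = KSS + KSDf * Λ⁻¹ * KSDfᵀ := by
    rw [hKdd, hΛ, inv_blockDiagonal' Q hQinv, hKSDf, of_sigma_mul_blockDiagonal',
      of_sigma_mul_transpose_of_sigma (fun i => KSD i * (Q i)⁻¹) KSD]
  subst hKdd' hΓDD
  rw [hΓrow', Matrix.mul_assoc (KUS m) KSS⁻¹ KSDf, Matrix.mul_assoc (KUS m),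
    inv_mul_mul_inv_add_eq KSS Λ KSDf KSDfᵀ hKSSinv hΛinv hKddinv hGLinv]
  simp only [Matrix.mul_assoc]

theorem stmt_3
    {M : ℕ} (hM : 0 < M)
    {S : Type} [Fintype S] [DecidableEq S]
    {D : Fin M → Type} [∀ m, Fintype (D m)] [∀ m, DecidableEq (D m)]
    (KSS : Matrix S S ℝ) (hKSSsym : KSSᵀ = KSS) (hKSSinv : IsUnit KSS.det)
    (KSD : ∀ m, Matrix S (D m) ℝ)
    (KDD : ∀ m, Matrix (D m) (D m) ℝ) (hKDDsym : ∀ m, (KDD m)ᵀ = KDD m)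
    (Q : ∀ m, Matrix (D m) (D m) ℝ)
    (hQ : ∀ m, Q m = KDD m - (KSD m)ᵀ * KSS⁻¹ * KSD m)
    (hQinv : ∀ m, IsUnit (Q m).det)
    (Λ : Matrix ((m : Fin M) × D m) ((m : Fin M) × D m) ℝ)
    (hΛ : Λ = Matrix.blockDiagonal' Q)
    (KSDf : Matrix S ((m : Fin M) × D m) ℝ)
    (hKSDf : KSDf = Matrix.of fun s d => KSD d.1 s d.2)
    (Kdd : Matrix S S ℝ)
    (hKdd : Kdd = KSS + ∑ m, KSD m * (Q m)⁻¹ * (KSD m)ᵀ)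
    (hKddinv : IsUnit Kdd.det)
    {U : Fin M → Type} [∀ m, Fintype (U m)] [∀ m, DecidableEq (U m)]
    (KUS : ∀ m, Matrix (U m) S ℝ)
    (ΓDD : Matrix ((m : Fin M) × D m) ((m : Fin M) × D m) ℝ)
    (hΓDD : ΓDD = KSDfᵀ * KSS⁻¹ * KSDf)
    (Γrow : ∀ m, Matrix (U m) ((k : Fin M) × D k) ℝ)
    (hΓrow : ∀ m, Γrow m = Matrix.of fun u d => (KUS m * KSS⁻¹ * KSD d.1) u d.2)
    (hGLinv : IsUnit (ΓDD + Λ).det)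
    :
    ∀ m, Γrow m * (ΓDD + Λ)⁻¹ = KUS m * Kdd⁻¹ * KSDf * Λ⁻¹ :=
  stmt_3_general KSS hKSSinv KSD Q hQinv Λ hΛ KSDf hKSDf Kdd hKdd hKddinv KUS ΓDD hΓDD Γrow hΓrow
    hGLinv
end

section
/- (Theorem 1, mean part: pPITC equals PITC.) For every block index m, the pPITC predictive mean equals the centralized PITC predictive mean: μ_{U_m} + Σ_{U_m S} Σ̈_{SS}^{-1} ÿ_S = μ_{U_m} + Γ_{U_m D} (Γ_{DD} + Λ)^{-1} (y_D − μ_D), where Γ_{U_m D} is the block row with blocks Γ_{U_m D_1},…,Γ_{U_m D_M} and Γ_{DD} + Λ is assumed invertible. -/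
open Matrix

/-- Multiplying a "horizontal stack" matrix by a block diagonal matrix acts blockwise. -/
lemma stack_mul_blockDiagonal' {M : ℕ} {D : Fin M → Type}
    [∀ m, Fintype (D m)] [∀ m, DecidableEq (D m)]
    {S : Type} [Fintype S]
    (KSD : ∀ m, Matrix S (D m) ℝ) (N : ∀ m, Matrix (D m) (D m) ℝ) :
    (Matrix.of fun s (d : Σ m, D m) => KSD d.1 s d.2) * Matrix.blockDiagonal' N
      = Matrix.of fun s (d : Σ m, D m) => (KSD d.1 * N d.1) s d.2 := by
  ext s ⟨m, d⟩
  simp only [Matrix.mul_apply, Matrix.of_apply]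
  rw [← Finset.univ_sigma_univ, Finset.sum_sigma]
  rw [Finset.sum_eq_single m]
  · simp [Matrix.mul_apply]
  · intro k _ hk
    apply Finset.sum_eq_zero
    intro j _
    rw [Matrix.blockDiagonal'_apply_ne _ _ _ hk, mul_zero]
  · simp

theorem stmt_4
    {M : ℕ} (hM : 0 < M)
    {S : Type} [Fintype S] [DecidableEq S]
    {D : Fin M → Type} [∀ m, Fintype (D m)] [∀ m, DecidableEq (D m)]
    (KSS : Matrix S S ℝ) (hKSSsym : KSSᵀ = KSS) (hKSSinv : IsUnit KSS.det)
    (KSD : ∀ m, Matrix S (D m) ℝ)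
    (KDD : ∀ m, Matrix (D m) (D m) ℝ) (hKDDsym : ∀ m, (KDD m)ᵀ = KDD m)
    (Q : ∀ m, Matrix (D m) (D m) ℝ)
    (hQ : ∀ m, Q m = KDD m - (KSD m)ᵀ * KSS⁻¹ * KSD m)
    (hQinv : ∀ m, IsUnit (Q m).det)
    (Λ : Matrix ((m : Fin M) × D m) ((m : Fin M) × D m) ℝ)
    (hΛ : Λ = Matrix.blockDiagonal' Q)
    (KSDf : Matrix S ((m : Fin M) × D m) ℝ)
    (hKSDf : KSDf = Matrix.of fun s d => KSD d.1 s d.2)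
    (Kdd : Matrix S S ℝ)
    (hKdd : Kdd = KSS + ∑ m, KSD m * (Q m)⁻¹ * (KSD m)ᵀ)
    (hKddinv : IsUnit Kdd.det)
    (yD μD : ((m : Fin M) × D m) → ℝ)
    (cY : ∀ m, D m → ℝ) (hcY : ∀ m d, cY m d = yD ⟨m, d⟩ - μD ⟨m, d⟩)
    (ydot : ∀ m, S → ℝ)
    (hydot : ∀ m, ydot m = KSD m *ᵥ ((Q m)⁻¹ *ᵥ cY m))
    (ydd : S → ℝ) (hydd : ydd = ∑ m, ydot m)
    {U : Fin M → Type} [∀ m, Fintype (U m)] [∀ m, DecidableEq (U m)]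
    (KUS : ∀ m, Matrix (U m) S ℝ)
    (μU : ∀ m, U m → ℝ)
    (ΓDD : Matrix ((m : Fin M) × D m) ((m : Fin M) × D m) ℝ)
    (hΓDD : ΓDD = KSDfᵀ * KSS⁻¹ * KSDf)
    (Γrow : ∀ m, Matrix (U m) ((k : Fin M) × D k) ℝ)
    (hΓrow : ∀ m, Γrow m = Matrix.of fun u d => (KUS m * KSS⁻¹ * KSD d.1) u d.2)
    (hGLinv : IsUnit (ΓDD + Λ).det)
    :
    ∀ m, μU m + KUS m *ᵥ (Kdd⁻¹ *ᵥ ydd)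
      = μU m + Γrow m *ᵥ ((ΓDD + Λ)⁻¹ *ᵥ (yD - μD)) := by
  -- the block diagonal inverse
  set B : Matrix ((m : Fin M) × D m) ((m : Fin M) × D m) ℝ :=
    Matrix.blockDiagonal' (fun m => (Q m)⁻¹) with hB
  have hΛB : Λ * B = 1 := by
    rw [hΛ, hB, ← Matrix.blockDiagonal'_mul]
    rw [show (fun k => Q k * (Q k)⁻¹) = fun _ : Fin M => (1 : Matrix (D _) (D _) ℝ) from
      funext fun k => Matrix.mul_nonsing_inv _ (hQinv k)]
    exact Matrix.blockDiagonal'_one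
  -- KSDf * B acts blockwise
  have hKB : KSDf * B = Matrix.of fun s (d : Σ m, D m) => (KSD d.1 * (Q d.1)⁻¹) s d.2 := by
    rw [hKSDf, hB]; exact stack_mul_blockDiagonal' KSD _
  -- key: KSDf * B * KSDfᵀ = Kdd - KSS
  have hKBK : KSDf * B * KSDfᵀ = Kdd - KSS := by
    have : Kdd - KSS = ∑ m, KSD m * (Q m)⁻¹ * (KSD m)ᵀ := by rw [hKdd]; abel
    rw [this, hKB]
    ext s t
    simp only [Matrix.mul_apply, Matrix.of_apply, Matrix.transpose_apply, Matrix.sum_apply,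
      hKSDf]
    rw [← Finset.univ_sigma_univ, Finset.sum_sigma]
  -- KSDf * B applied to the centered data gives ydd
  have hKBc : (KSDf * B) *ᵥ (yD - μD) = ydd := by
    ext s
    simp only [Matrix.mulVec, dotProduct, hKB, Matrix.of_apply]
    rw [← Finset.univ_sigma_univ, Finset.sum_sigma, hydd]
    simp only [Finset.sum_apply]
    refine Finset.sum_congr rfl fun m _ => ?_
    rw [hydot, Matrix.mulVec_mulVec]
    simp only [Matrix.mulVec, dotProduct]
    refine Finset.sum_congr rfl fun d _ => ?_
    rw [hcY]
    rfl
  -- the Woodbury right inverse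
  set X : Matrix ((m : Fin M) × D m) ((m : Fin M) × D m) ℝ :=
    B - B * KSDfᵀ * Kdd⁻¹ * (KSDf * B) with hX
  have hright : (ΓDD + Λ) * X = 1 := by
    have h1 : KSS⁻¹ * KSS = 1 := Matrix.nonsing_inv_mul _ hKSSinv
    have h2 : Kdd * Kdd⁻¹ = 1 := Matrix.mul_nonsing_inv _ hKddinv
    have key : KSS⁻¹ * (Kdd - KSS) * Kdd⁻¹ = KSS⁻¹ - Kdd⁻¹ := by
      rw [Matrix.mul_sub, Matrix.sub_mul, Matrix.mul_assoc KSS⁻¹ Kdd Kdd⁻¹, h2, h1,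
        Matrix.mul_one, Matrix.one_mul]
    have hΛ1 : Λ * (B * KSDfᵀ * Kdd⁻¹ * (KSDf * B)) = KSDfᵀ * Kdd⁻¹ * (KSDf * B) := by
      rw [show Λ * (B * KSDfᵀ * Kdd⁻¹ * (KSDf * B))
          = (Λ * B) * (KSDfᵀ * Kdd⁻¹ * (KSDf * B)) by simp only [Matrix.mul_assoc], hΛB,
        Matrix.one_mul]
    rw [hΓDD, hX, Matrix.add_mul, Matrix.mul_sub, Matrix.mul_sub, hΛ1, hΛB]
    have e1 : KSDfᵀ * KSS⁻¹ * KSDf * (B * KSDfᵀ * Kdd⁻¹ * (KSDf * B))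
        = KSDfᵀ * (KSS⁻¹ * (KSDf * B * KSDfᵀ) * Kdd⁻¹) * (KSDf * B) := by
      simp only [Matrix.mul_assoc]
    rw [e1, hKBK, key]
    simp only [Matrix.mul_sub, Matrix.sub_mul, Matrix.mul_assoc]
    abel
  have hinv : (ΓDD + Λ)⁻¹ = X := Matrix.inv_eq_right_inv hright
  -- Γrow as a matrix product
  have hΓrow' : ∀ m, Γrow m = KUS m * KSS⁻¹ * KSDf := by
    intro m
    ext u ⟨k, d⟩
    rw [hΓrow]
    simp only [Matrix.of_apply, Matrix.mul_apply, hKSDf]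
  -- KSDf * X = KSS * Kdd⁻¹ * (KSDf * B)
  have hKX : KSDf * X = KSS * Kdd⁻¹ * (KSDf * B) := by
    have h2 : Kdd * Kdd⁻¹ = 1 := Matrix.mul_nonsing_inv _ hKddinv
    rw [hX, Matrix.mul_sub]
    have h3 : KSDf * (B * KSDfᵀ * Kdd⁻¹ * (KSDf * B))
        = (Kdd - KSS) * (Kdd⁻¹ * (KSDf * B)) := by
      rw [← hKBK]; simp only [Matrix.mul_assoc]
    rw [h3, Matrix.sub_mul, ← Matrix.mul_assoc Kdd, h2, Matrix.one_mul]
    simp only [Matrix.mul_assoc]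
    abel
  intro m
  congr 1
  rw [hinv, Matrix.mulVec_mulVec, hΓrow', Matrix.mulVec_mulVec]
  have hfinal : KUS m * KSS⁻¹ * KSDf * X = KUS m * Kdd⁻¹ * (KSDf * B) := by
    rw [Matrix.mul_assoc (KUS m * KSS⁻¹) KSDf X, hKX,
      Matrix.mul_assoc (KUS m) KSS⁻¹ (KSS * Kdd⁻¹ * (KSDf * B))]
    rw [show KSS⁻¹ * (KSS * Kdd⁻¹ * (KSDf * B)) = (KSS⁻¹ * KSS) * (Kdd⁻¹ * (KSDf * B)) by
      simp only [Matrix.mul_assoc], Matrix.nonsing_inv_mul _ hKSSinv, Matrix.one_mul,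
      ← Matrix.mul_assoc, ← Matrix.mul_assoc]
  rw [hfinal, ← hKBc, Matrix.mulVec_mulVec]
end

section
/- For any two distinct block indices i ≠ j, writing α_{U_i S} := Σ_{U_i S} Σ_{SS}^{-1} and α_{S U_j} := Σ_{SS}^{-1} Σ_{S U_j}, Γ̃_{U_i D} Λ^{-1} Γ̃_{D U_j} = α_{U_i S} Σ̈_{SS} α_{S U_j} + Σ_{U_i S} Σ_{SS}^{-1} Σ_{S U_j} − Φ_{U_i S}^i α_{S U_j} − α_{U_i S} Φ_{S U_j}^j, where Γ̃_{D U_j} is the transpose of Γ̃_{U_j D} and Φ_{S U_j}^j is the transpose of Φ_{U_j S}^j. -/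
/-!
Because `Λ` is block diagonal, the left-hand side is the sum over the data blocks `k` of
`Γ̃_{U_i D_k} Σ_{D_k D_k|S}⁻¹ Γ̃_{D_k U_j}`. For `k ∉ {i, j}` both outer factors are `Γ`-blocks,
so the summand is `α_{U_i S} Σ̇^k_{SS} α_{S U_j}`, the `k`-th term of `α_{U_i S} Σ̈_{SS} α_{S U_j}`.
The blocks `k = i` and `k = j` contribute the `Σ̇_{U S}`-parts of `Φ^i` and `Φ^j`, and the other
terms cancel because `α_{U_i S} Σ_{SS} α_{S U_j} = Σ_{U_i S} Σ_{SS}⁻¹ Σ_{S U_j}`; transposing `Φ^j`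
needs the symmetry of `Σ_{SS}` and of the `Σ_{D_m D_m|S}`.
-/

open Matrix

theorem Fintype.sum_eq_sum_add_sub_add_sub {ι G : Type*} [Fintype ι] [AddCommGroup G]
    {f g : ι → G} {i j : ι} (hij : i ≠ j) (h : ∀ k, k ≠ i → k ≠ j → f k = g k) :
    ∑ k, f k = ∑ k, g k + (f i - g i) + (f j - g j) := by
  have hdiff : ∑ k, (f k - g k) = (f i - g i) + (f j - g j) :=
    Fintype.sum_eq_add i j hij fun k ⟨hki, hkj⟩ => sub_eq_zero.2 (h k hki hkj)
  rw [Finset.sum_sub_distrib] at hdiff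
  rw [add_assoc, ← hdiff, add_sub_cancel]

namespace Matrix

section BlockDiagonal

variable {ι : Type*} [Fintype ι] [DecidableEq ι] {D : ι → Type*} [∀ m, Fintype (D m)]

theorem inv_blockDiagonal'_s10 [∀ m, DecidableEq (D m)] {α : Type*} [CommRing α]
    (W : ∀ m, Matrix (D m) (D m) α) (hW : ∀ m, IsUnit (W m).det) :
    (blockDiagonal' W)⁻¹ = blockDiagonal' fun m => (W m)⁻¹ := by
  refine inv_eq_right_inv ?_
  rw [← blockDiagonal'_mul, ← blockDiagonal'_one]
  exact congrArg _ (funext fun m => mul_nonsing_inv _ (hW m))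

theorem mul_blockDiagonal'_mul {α P R : Type*} [Semiring α]
    (X : Matrix P ((m : ι) × D m) α) (W : ∀ m, Matrix (D m) (D m) α)
    (Z : Matrix ((m : ι) × D m) R α) :
    X * blockDiagonal' W * Z
      = ∑ m, X.submatrix id (Sigma.mk m) * W m * Z.submatrix (Sigma.mk m) id := by
  ext p r
  simp only [mul_apply, sum_apply, submatrix_apply, id, ← Finset.univ_sigma_univ,
    Finset.sum_sigma, blockDiagonal'_apply]
  refine Finset.sum_congr rfl fun m _ => Finset.sum_congr rfl fun d _ => ?_
  rw [Fintype.sum_eq_single m fun k hk => by simp [hk]]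
  simp

end BlockDiagonal

section BlockRow

variable {ι : Type*} [DecidableEq ι] {D : ι → Type*} {U α : Type*} (m : ι)
  (A : Matrix U (D m) α) (B : ∀ k, Matrix U (D k) α)

theorem submatrix_sigmaMk_of_dite_self :
    (of fun u (d : (k : ι) × D k) =>
      if h : d.1 = m then A u (cast (congrArg D h) d.2) else B d.1 u d.2).submatrix id
        (Sigma.mk m) = A := by
  ext u d
  simp

theorem submatrix_sigmaMk_of_dite_of_ne {k : ι} (hk : k ≠ m) :
    (of fun u (d : (k : ι) × D k) =>
      if h : d.1 = m then A u (cast (congrArg D h) d.2) else B d.1 u d.2).submatrix id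
        (Sigma.mk k) = B k := by
  ext u d
  simp [hk]

end BlockRow

end Matrix

theorem stmt_10_general
    {M : ℕ}
    {S : Type} [Fintype S] [DecidableEq S]
    {D : Fin M → Type} [∀ m, Fintype (D m)] [∀ m, DecidableEq (D m)]
    (KSS : Matrix S S ℝ) (hKSSsym : KSSᵀ = KSS) (hKSSinv : IsUnit KSS.det)
    (KSD : ∀ m, Matrix S (D m) ℝ)
    (KDD : ∀ m, Matrix (D m) (D m) ℝ) (hKDDsym : ∀ m, (KDD m)ᵀ = KDD m)
    (Q : ∀ m, Matrix (D m) (D m) ℝ)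
    (hQ : ∀ m, Q m = KDD m - (KSD m)ᵀ * KSS⁻¹ * KSD m)
    (hQinv : ∀ m, IsUnit (Q m).det)
    (Λ : Matrix ((m : Fin M) × D m) ((m : Fin M) × D m) ℝ)
    (hΛ : Λ = Matrix.blockDiagonal' Q)
    (Kdd : Matrix S S ℝ)
    (hKdd : Kdd = KSS + ∑ m, KSD m * (Q m)⁻¹ * (KSD m)ᵀ)
    {U : Fin M → Type}
    (KUS : ∀ m, Matrix (U m) S ℝ)
    (KUD : ∀ m, Matrix (U m) (D m) ℝ)
    (tΓ : ∀ m, Matrix (U m) ((k : Fin M) × D k) ℝ)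
    (htΓ : ∀ m, tΓ m = Matrix.of fun u d =>
      if h : d.1 = m then KUD m u (cast (congrArg D h) d.2)
      else (KUS m * KSS⁻¹ * KSD d.1) u d.2)
    (Φm : ∀ m, Matrix (U m) S ℝ)
    (hΦm : ∀ m, Φm m = KUS m + KUS m * KSS⁻¹ * (KSD m * (Q m)⁻¹ * (KSD m)ᵀ)
      - KUD m * (Q m)⁻¹ * (KSD m)ᵀ)
    (i j : Fin M) (hij : i ≠ j) :
    tΓ i * Λ⁻¹ * (tΓ j)ᵀ
      = (KUS i * KSS⁻¹) * Kdd * (KSS⁻¹ * (KUS j)ᵀ)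
        + KUS i * KSS⁻¹ * (KUS j)ᵀ
        - Φm i * (KSS⁻¹ * (KUS j)ᵀ)
        - (KUS i * KSS⁻¹) * (Φm j)ᵀ := by
  have hPsym : KSS⁻¹ᵀ = KSS⁻¹ := IsSymm.inv hKSSsym
  have hQinvsym : ∀ m, (Q m)⁻¹ᵀ = (Q m)⁻¹ := fun m => by
    rw [transpose_nonsing_inv, hQ, transpose_sub, transpose_mul, transpose_mul, hKDDsym, hPsym,
      transpose_transpose, Matrix.mul_assoc]
  have hrow_self : ∀ m, (tΓ m).submatrix id (Sigma.mk m) = KUD m := fun m => by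
    rw [htΓ]
    exact submatrix_sigmaMk_of_dite_self m (KUD m) fun k => KUS m * KSS⁻¹ * KSD k
  have hrow_ne : ∀ m k, k ≠ m → (tΓ m).submatrix id (Sigma.mk k) = KUS m * KSS⁻¹ * KSD k :=
    fun m k hk => by
      rw [htΓ]
      exact submatrix_sigmaMk_of_dite_of_ne m (KUD m) (fun k => KUS m * KSS⁻¹ * KSD k) hk
  have hcol_ne : ∀ m k, k ≠ m →
      (tΓ m)ᵀ.submatrix (Sigma.mk k) id = (KSD k)ᵀ * (KSS⁻¹ * (KUS m)ᵀ) := fun m k hk => by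
    rw [← transpose_submatrix, hrow_ne m k hk, transpose_mul, transpose_mul, hPsym]
  have hoff : ∀ k, k ≠ i → k ≠ j →
      (tΓ i).submatrix id (Sigma.mk k) * (Q k)⁻¹ * (tΓ j)ᵀ.submatrix (Sigma.mk k) id
        = (KUS i * KSS⁻¹) * (KSD k * (Q k)⁻¹ * (KSD k)ᵀ) * (KSS⁻¹ * (KUS j)ᵀ) :=
    fun k hki hkj => by
      rw [hrow_ne i k hki, hcol_ne j k hkj]
      simp only [Matrix.mul_assoc]
  rw [hΛ, inv_blockDiagonal'_s10 Q hQinv, mul_blockDiagonal'_mul,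
    Fintype.sum_eq_sum_add_sub_add_sub hij hoff, hrow_self, hcol_ne j i hij,
    hrow_ne i j hij.symm, ← transpose_submatrix, hrow_self, hKdd, hΦm, hΦm]
  have hcancel : KSS * (KSS⁻¹ * (KUS j)ᵀ) = (KUS j)ᵀ := mul_nonsing_inv_cancel_left _ _ hKSSinv
  simp only [transpose_add, transpose_sub, transpose_mul, transpose_transpose, hPsym, hQinvsym,
    Matrix.add_mul, Matrix.mul_add, Matrix.sub_mul, Matrix.mul_sub, Matrix.sum_mul,
    Matrix.mul_sum, Matrix.mul_assoc, hcancel]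
  abel

theorem stmt_10
    {M : ℕ} (hM : 0 < M)
    {S : Type} [Fintype S] [DecidableEq S]
    {D : Fin M → Type} [∀ m, Fintype (D m)] [∀ m, DecidableEq (D m)]
    (KSS : Matrix S S ℝ) (hKSSsym : KSSᵀ = KSS) (hKSSinv : IsUnit KSS.det)
    (KSD : ∀ m, Matrix S (D m) ℝ)
    (KDD : ∀ m, Matrix (D m) (D m) ℝ) (hKDDsym : ∀ m, (KDD m)ᵀ = KDD m)
    (Q : ∀ m, Matrix (D m) (D m) ℝ)
    (hQ : ∀ m, Q m = KDD m - (KSD m)ᵀ * KSS⁻¹ * KSD m)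
    (hQinv : ∀ m, IsUnit (Q m).det)
    (Λ : Matrix ((m : Fin M) × D m) ((m : Fin M) × D m) ℝ)
    (hΛ : Λ = Matrix.blockDiagonal' Q)
    (KSDf : Matrix S ((m : Fin M) × D m) ℝ)
    (hKSDf : KSDf = Matrix.of fun s d => KSD d.1 s d.2)
    (Kdd : Matrix S S ℝ)
    (hKdd : Kdd = KSS + ∑ m, KSD m * (Q m)⁻¹ * (KSD m)ᵀ)
    {U : Fin M → Type} [∀ m, Fintype (U m)] [∀ m, DecidableEq (U m)]
    (KUS : ∀ m, Matrix (U m) S ℝ)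
    (KUD : ∀ m, Matrix (U m) (D m) ℝ)
    (tΓ : ∀ m, Matrix (U m) ((k : Fin M) × D k) ℝ)
    (htΓ : ∀ m, tΓ m = Matrix.of fun u d =>
      if h : d.1 = m then KUD m u (cast (congrArg D h) d.2)
      else (KUS m * KSS⁻¹ * KSD d.1) u d.2)
    (Φm : ∀ m, Matrix (U m) S ℝ)
    (hΦm : ∀ m, Φm m = KUS m + KUS m * KSS⁻¹ * (KSD m * (Q m)⁻¹ * (KSD m)ᵀ)
      - KUD m * (Q m)⁻¹ * (KSD m)ᵀ)
    (i j : Fin M) (hij : i ≠ j) :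
    tΓ i * Λ⁻¹ * (tΓ j)ᵀ
      = (KUS i * KSS⁻¹) * Kdd * (KSS⁻¹ * (KUS j)ᵀ)
        + KUS i * KSS⁻¹ * (KUS j)ᵀ
        - Φm i * (KSS⁻¹ * (KUS j)ᵀ)
        - (KUS i * KSS⁻¹) * (Φm j)ᵀ :=
  stmt_10_general KSS hKSSsym hKSSinv KSD KDD hKDDsym Q hQ hQinv Λ hΛ Kdd hKdd KUS KUD tΓ htΓ Φm hΦm
    i j hij
end

section
/- (Theorem 3, mean part: pICF-based GP equals centralized ICF-based GP.) The matrix Fᵀ F + σ_n² I is invertible, and the pICF predictive mean equals the centralized ICF predictive mean: μ_U + Σ_{m=1}^{M} μ̃_U^m = μ_U + Σ_{UD} (Fᵀ F + σ_n² I)^{-1} (y_D − μ_D), where Σ_{UD} is the block row with blocks Σ_{UD_1},…,Σ_{UD_M}. -/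
open Matrix

lemma auxPosDef {n k : Type} [Fintype n] [DecidableEq n] [Fintype k]
    (B : Matrix k n ℝ) {c : ℝ} (hc : 0 < c) :
    (Bᵀ * B + c • (1 : Matrix n n ℝ)).PosDef := by
  have h1 : (Bᵀ * B).PosSemidef := by
    rw [show Bᵀ = Bᴴ from (conjTranspose_eq_transpose_of_trivial B).symm]
    exact posSemidef_conjTranspose_mul_self B
  have h2 : (c • (1 : Matrix n n ℝ)).PosDef := by
    rw [smul_one_eq_diagonal]
    exact PosDef.diagonal (fun _ => hc)
  exact Matrix.PosDef.posSemidef_add h1 h2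

theorem stmt_14
    {M : ℕ} (hM : 0 < M)
    {D : Fin M → Type} [∀ m, Fintype (D m)] [∀ m, DecidableEq (D m)]
    {U : Type} [Fintype U] [DecidableEq U]
    (R : ℕ) (σn : ℝ) (hσn : σn ≠ 0)
    (Fm : ∀ m, Matrix (Fin R) (D m) ℝ)
    (F : Matrix (Fin R) ((m : Fin M) × D m) ℝ)
    (hF : F = Matrix.of fun r d => Fm d.1 r d.2)
    (KUD : ∀ m, Matrix U (D m) ℝ)
    (KUDf : Matrix U ((m : Fin M) × D m) ℝ)
    (hKUDf : KUDf = Matrix.of fun u d => KUD d.1 u d.2)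
    (Φ : Matrix (Fin R) (Fin R) ℝ)
    (hΦ : Φ = 1 + (σn ^ 2)⁻¹ • ∑ m, Fm m * (Fm m)ᵀ)
    (yD μD : ((m : Fin M) × D m) → ℝ)
    (μU : U → ℝ)
    (cY : ∀ m, D m → ℝ) (hcY : ∀ m d, cY m d = yD ⟨m, d⟩ - μD ⟨m, d⟩)
    (ydd : Fin R → ℝ)
    (hydd : ydd = Φ⁻¹ *ᵥ (∑ m, Fm m *ᵥ cY m))
    (μt : ∀ m, U → ℝ)
    (hμt : ∀ m, μt m = (σn ^ 2)⁻¹ • (KUD m *ᵥ cY m)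
      - (σn ^ 4)⁻¹ • ((Fm m * (KUD m)ᵀ)ᵀ *ᵥ ydd)) :
    IsUnit (Fᵀ * F + σn ^ 2 • (1 : Matrix ((m : Fin M) × D m) ((m : Fin M) × D m) ℝ)) ∧
    μU + ∑ m, μt m
      = μU + KUDf *ᵥ ((Fᵀ * F + σn ^ 2 • 1)⁻¹ *ᵥ (yD - μD)) := by
  have hσ2 : (0:ℝ) < σn ^ 2 := by positivity
  have hσ2' : (σn:ℝ) ^ 2 ≠ 0 := hσ2.ne'
  set c : ((m : Fin M) × D m) → ℝ := yD - μD with hc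
  have hcY' : ∀ m, cY m = fun d => c ⟨m, d⟩ := by
    intro m; funext d; simp [hcY, hc]
  -- block identities
  have hFF : ∑ m, Fm m * (Fm m)ᵀ = F * Fᵀ := by
    subst hF
    ext r r'
    simp only [Matrix.sum_apply, Matrix.mul_apply, transpose_apply, of_apply]
    rw [← Finset.univ_sigma_univ, Finset.sum_sigma]
  have hFc : ∑ m, Fm m *ᵥ cY m = F *ᵥ c := by
    subst hF
    funext r
    simp only [Finset.sum_apply, mulVec, dotProduct, of_apply]
    rw [← Finset.univ_sigma_univ, Finset.sum_sigma]
    apply Finset.sum_congr rfl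
    intro m _
    apply Finset.sum_congr rfl
    intro d _
    rw [hcY' m]
  have hKc : ∑ m, KUD m *ᵥ cY m = KUDf *ᵥ c := by
    subst hKUDf
    funext u
    simp only [Finset.sum_apply, mulVec, dotProduct, of_apply]
    rw [← Finset.univ_sigma_univ, Finset.sum_sigma]
    apply Finset.sum_congr rfl
    intro m _
    apply Finset.sum_congr rfl
    intro d _
    rw [hcY' m]
  have hKF : ∑ m, KUD m * (Fm m)ᵀ = KUDf * Fᵀ := by
    subst hF; subst hKUDf
    ext u r
    simp only [Matrix.sum_apply, Matrix.mul_apply, transpose_apply, of_apply]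
    rw [← Finset.univ_sigma_univ, Finset.sum_sigma]
  -- Φ is positive definite
  have hΦ' : Φ = (σn⁻¹ • Fᵀ)ᵀ * (σn⁻¹ • Fᵀ) + (1:ℝ) • 1 := by
    rw [hΦ, hFF, transpose_smul, transpose_transpose, Matrix.smul_mul, Matrix.mul_smul,
      smul_smul, one_smul, add_comm, ← pow_two, inv_pow]
  have hΦpd : Φ.PosDef := by
    rw [hΦ']
    exact auxPosDef (σn⁻¹ • Fᵀ) one_pos
  have hΦdet : IsUnit Φ.det := hΦpd.det_pos.ne'.isUnit
  have hΦΦ : Φ * Φ⁻¹ = 1 := mul_nonsing_inv Φ hΦdet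
  -- A is positive definite
  have hApd := auxPosDef F hσ2
  refine ⟨hApd.isUnit, ?_⟩
  -- key matrix facts
  have hFFT : F * Fᵀ = σn ^ 2 • (Φ - 1) := by
    rw [hΦ, ← hFF, add_sub_cancel_left, smul_smul, mul_inv_cancel₀ hσ2', one_smul]
  set A : Matrix ((m : Fin M) × D m) ((m : Fin M) × D m) ℝ :=
    Fᵀ * F + σn ^ 2 • 1 with hA
  set G : Matrix ((m : Fin M) × D m) ((m : Fin M) × D m) ℝ := Fᵀ * (Φ⁻¹ * F) with hG
  have hAG : A * G = σn ^ 2 • (Fᵀ * F) := by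
    have h1 : Fᵀ * F * G = σn ^ 2 • (Fᵀ * F - G) := by
      calc Fᵀ * F * G = Fᵀ * (F * Fᵀ) * (Φ⁻¹ * F) := by
            simp only [hG, Matrix.mul_assoc]
        _ = σn ^ 2 • (Fᵀ * ((Φ - 1) * (Φ⁻¹ * F))) := by
            rw [hFFT, Matrix.mul_smul, Matrix.smul_mul, Matrix.mul_assoc]
        _ = σn ^ 2 • (Fᵀ * F - G) := by
            rw [Matrix.sub_mul, Matrix.one_mul, ← Matrix.mul_assoc, hΦΦ, Matrix.one_mul,
              Matrix.mul_sub, hG]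
    rw [hA, Matrix.add_mul, h1, Matrix.smul_mul, Matrix.one_mul, smul_sub]
    abel
  have hABone : A * ((σn ^ 2)⁻¹ • (1 : Matrix _ _ ℝ) - (σn ^ 4)⁻¹ • G) = 1 := by
    rw [Matrix.mul_sub, Matrix.mul_smul, Matrix.mul_smul, Matrix.mul_one, hAG, smul_smul,
      show (σn ^ 4)⁻¹ * σn ^ 2 = (σn ^ 2)⁻¹ by field_simp]
    rw [hA, smul_add, smul_smul, inv_mul_cancel₀ hσ2', one_smul]
    abel
  have hAinv : A⁻¹ = (σn ^ 2)⁻¹ • (1 : Matrix _ _ ℝ) - (σn ^ 4)⁻¹ • G :=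
    inv_eq_right_inv hABone
  have hsmv : ∀ (Am : Fin M → Matrix U ((m : Fin M) × D m) ℝ) (v : ((m : Fin M) × D m) → ℝ),
      (∑ m, Am m) *ᵥ v = ∑ m, Am m *ᵥ v := by
    intro Am v
    funext u
    simp only [Finset.sum_apply, mulVec, dotProduct, Matrix.sum_apply, Finset.sum_mul]
    exact Finset.sum_comm
  have hsmv2 : ∀ (Am : Fin M → Matrix U (Fin R) ℝ) (v : Fin R → ℝ),
      (∑ m, Am m) *ᵥ v = ∑ m, Am m *ᵥ v := by
    intro Am v
    funext u
    simp only [Finset.sum_apply, mulVec, dotProduct, Matrix.sum_apply, Finset.sum_mul]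
    exact Finset.sum_comm
  have hμtsum : ∑ m, μt m
      = (σn ^ 2)⁻¹ • (KUDf *ᵥ c) - (σn ^ 4)⁻¹ • ((KUDf * Fᵀ) *ᵥ ydd) := by
    simp only [hμt, transpose_mul, transpose_transpose]
    rw [Finset.sum_sub_distrib, ← Finset.smul_sum, ← Finset.smul_sum, hKc, ← hsmv2, hKF]
  rw [hAinv, hμtsum, hydd, hFc]
  congr 1
  conv_rhs => rw [Matrix.sub_mulVec, Matrix.smul_mulVec, Matrix.smul_mulVec,
    Matrix.one_mulVec, Matrix.mulVec_sub, Matrix.mulVec_smul, Matrix.mulVec_smul, hG,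
    ← Matrix.mulVec_mulVec, ← Matrix.mulVec_mulVec, Matrix.mulVec_mulVec]
end

section
/- (Theorem 3, covariance part: pICF-based GP equals centralized ICF-based GP.) The matrix Fᵀ F + σ_n² I is invertible, and the pICF predictive covariance equals the centralized ICF predictive covariance: Σ_{UU} − Σ_{m=1}^{M} Σ̃_{UU}^m = Σ_{UU} − Σ_{UD} (Fᵀ F + σ_n² I)^{-1} Σ_{DU}, where Σ_{UD} is the block row with blocks Σ_{UD_1},…,Σ_{UD_M} and Σ_{DU} is its transpose. -/
open Matrix

lemma sigma_mul_t {ι : Type*} [Fintype ι] {D : ι → Type} [∀ i, Fintype (D i)]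
    {α β : Type*} [Fintype α] [Fintype β]
    (A : ∀ i, Matrix α (D i) ℝ) (B : ∀ i, Matrix β (D i) ℝ) :
    (Matrix.of fun a (d : (i : ι) × D i) => A d.1 a d.2) *
      (Matrix.of fun b (d : (i : ι) × D i) => B d.1 b d.2)ᵀ = ∑ i, A i * (B i)ᵀ := by
  ext a b
  rw [Matrix.mul_apply, ← Finset.univ_sigma_univ, Finset.sum_sigma]
  simp [Matrix.sum_apply, Matrix.mul_apply]

theorem stmt_15
    {M : ℕ} (hM : 0 < M)
    {D : Fin M → Type} [∀ m, Fintype (D m)] [∀ m, DecidableEq (D m)]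
    {U : Type} [Fintype U] [DecidableEq U]
    (R : ℕ) (σn : ℝ) (hσn : σn ≠ 0)
    (Fm : ∀ m, Matrix (Fin R) (D m) ℝ)
    (F : Matrix (Fin R) ((m : Fin M) × D m) ℝ)
    (hF : F = Matrix.of fun r d => Fm d.1 r d.2)
    (KUD : ∀ m, Matrix U (D m) ℝ)
    (KUDf : Matrix U ((m : Fin M) × D m) ℝ)
    (hKUDf : KUDf = Matrix.of fun u d => KUD d.1 u d.2)
    (Φ : Matrix (Fin R) (Fin R) ℝ)
    (hΦ : Φ = 1 + (σn ^ 2)⁻¹ • ∑ m, Fm m * (Fm m)ᵀ)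
    (KUU : Matrix U U ℝ)
    (Kdd : Matrix (Fin R) U ℝ)
    (hKdd : Kdd = Φ⁻¹ * ∑ m, Fm m * (KUD m)ᵀ)
    (Kt : ∀ m, Matrix U U ℝ)
    (hKt : ∀ m, Kt m = (σn ^ 2)⁻¹ • (KUD m * (KUD m)ᵀ)
      - (σn ^ 4)⁻¹ • ((Fm m * (KUD m)ᵀ)ᵀ * Kdd)) :
    IsUnit (Fᵀ * F + σn ^ 2 • (1 : Matrix ((m : Fin M) × D m) ((m : Fin M) × D m) ℝ)) ∧
    KUU - ∑ m, Kt m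
      = KUU - KUDf * (Fᵀ * F + σn ^ 2 • 1)⁻¹ * KUDfᵀ := by
  set c : ℝ := σn ^ 2 with hc
  have hcpos : 0 < c := by positivity
  have hcne : c ≠ 0 := hcpos.ne'
  -- block identities
  have hFFT : F * Fᵀ = ∑ m, Fm m * (Fm m)ᵀ := by
    rw [hF]; exact sigma_mul_t Fm Fm
  have hFK : F * KUDfᵀ = ∑ m, Fm m * (KUD m)ᵀ := by
    rw [hF, hKUDf]; exact sigma_mul_t Fm KUD
  have hKK : KUDf * KUDfᵀ = ∑ m, KUD m * (KUD m)ᵀ := by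
    rw [hKUDf]; exact sigma_mul_t KUD KUD
  have hΦ' : Φ = 1 + c⁻¹ • (F * Fᵀ) := by rw [hΦ, hFFT]
  -- positive definiteness of Φ
  have hsemi : ((σn⁻¹ • F) * (σn⁻¹ • F)ᵀ).PosSemidef := by
    have := Matrix.posSemidef_self_mul_conjTranspose (σn⁻¹ • F)
    rwa [conjTranspose_eq_transpose_of_trivial] at this
  have hsmul : c⁻¹ • (F * Fᵀ) = (σn⁻¹ • F) * (σn⁻¹ • F)ᵀ := by
    rw [transpose_smul, Matrix.smul_mul, Matrix.mul_smul, smul_smul, hc]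
    ring_nf
  have hΦpd : Φ.PosDef := by
    rw [hΦ', hsmul]
    exact Matrix.PosDef.add_posSemidef Matrix.PosDef.one hsemi
  have hΦunit : IsUnit Φ := hΦpd.isUnit
  have hΦinv : Φ * Φ⁻¹ = 1 := Matrix.mul_nonsing_inv _ ((Matrix.isUnit_iff_isUnit_det _).mp hΦunit)
  -- positive definiteness of A
  have hApd : (Fᵀ * F + c • (1 : Matrix ((m : Fin M) × D m) ((m : Fin M) × D m) ℝ)).PosDef := by
    have h1 : (Fᵀ * F).PosSemidef := by
      have := Matrix.posSemidef_conjTranspose_mul_self F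
      rwa [conjTranspose_eq_transpose_of_trivial] at this
    have h2 : (c • (1 : Matrix ((m : Fin M) × D m) ((m : Fin M) × D m) ℝ)).PosDef := by
      rw [Matrix.smul_one_eq_diagonal]
      exact Matrix.posDef_diagonal_iff.mpr fun _ => hcpos
    exact Matrix.PosDef.posSemidef_add h1 h2
  have hAunit : IsUnit (Fᵀ * F + c • (1 : Matrix ((m : Fin M) × D m) ((m : Fin M) × D m) ℝ)) :=
    hApd.isUnit
  refine ⟨hAunit, ?_⟩
  -- S = c • Φ - c • 1
  have hS : F * Fᵀ = c • Φ - c • 1 := by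
    rw [hΦ', smul_add, smul_smul, mul_inv_cancel₀ hcne, one_smul]
    abel
  set X : Matrix ((m : Fin M) × D m) ((m : Fin M) × D m) ℝ := Fᵀ * Φ⁻¹ * F with hX
  have key : (Fᵀ * F) * X = c • (Fᵀ * F) - c • X := by
    have h1 : Fᵀ * F * Fᵀ = c • (Fᵀ * Φ) - c • Fᵀ := by
      rw [Matrix.mul_assoc, hS, Matrix.mul_sub, Matrix.mul_smul, Matrix.mul_smul, Matrix.mul_one]
    calc (Fᵀ * F) * X = (Fᵀ * F * Fᵀ) * (Φ⁻¹ * F) := by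
          rw [hX]; simp only [Matrix.mul_assoc]
      _ = c • (Fᵀ * (Φ * Φ⁻¹) * F) - c • X := by
          rw [h1, Matrix.sub_mul, Matrix.smul_mul, Matrix.smul_mul, hX]
          simp only [Matrix.mul_assoc]
      _ = c • (Fᵀ * F) - c • X := by rw [hΦinv, Matrix.mul_one]
  -- inverse formula
  have hinv : (Fᵀ * F + c • (1 : Matrix ((m : Fin M) × D m) ((m : Fin M) × D m) ℝ))⁻¹
      = c⁻¹ • 1 - (c ^ 2)⁻¹ • X := by
    apply Matrix.inv_eq_right_inv
    rw [Matrix.mul_sub, Matrix.add_mul, Matrix.add_mul, Matrix.mul_smul, Matrix.mul_smul,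
      Matrix.mul_smul, Matrix.mul_smul, Matrix.mul_one, key]
    have e1 : (c ^ 2)⁻¹ * c = c⁻¹ := by field_simp
    have e2 : c⁻¹ * c = 1 := inv_mul_cancel₀ hcne
    simp only [Matrix.smul_mul, Matrix.one_mul, Matrix.mul_one, smul_sub, smul_smul, e1, e2,
      one_smul]
    abel
  -- sum of Kt
  have hσ4 : (σn ^ 4)⁻¹ = (c ^ 2)⁻¹ := by rw [hc]; ring_nf
  have hsum : ∑ m, Kt m = c⁻¹ • (KUDf * KUDfᵀ) - (c ^ 2)⁻¹ • (KUDf * X * KUDfᵀ) := by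
    have hKddX : ∑ m, ((Fm m * (KUD m)ᵀ)ᵀ * Kdd) = KUDf * X * KUDfᵀ := by
      have hs : ∑ m, ((Fm m * (KUD m)ᵀ)ᵀ * Kdd) = (∑ m, (Fm m * (KUD m)ᵀ))ᵀ * Kdd := by
        rw [Matrix.transpose_sum, Matrix.sum_mul]
      rw [hs, ← hFK, hKdd, ← hFK, transpose_mul, transpose_transpose, hX]
      simp only [Matrix.mul_assoc]
    calc ∑ m, Kt m = ∑ m, ((σn ^ 2)⁻¹ • (KUD m * (KUD m)ᵀ)
          - (σn ^ 4)⁻¹ • ((Fm m * (KUD m)ᵀ)ᵀ * Kdd)) := by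
          exact Finset.sum_congr rfl fun m _ => hKt m
      _ = (σn ^ 2)⁻¹ • ∑ m, (KUD m * (KUD m)ᵀ)
          - (σn ^ 4)⁻¹ • ∑ m, ((Fm m * (KUD m)ᵀ)ᵀ * Kdd) := by
          rw [Finset.sum_sub_distrib, Finset.smul_sum, Finset.smul_sum]
      _ = c⁻¹ • (KUDf * KUDfᵀ) - (c ^ 2)⁻¹ • (KUDf * X * KUDfᵀ) := by
          rw [hKK, hKddX, hσ4, hc]
  rw [hsum, hinv, Matrix.mul_sub, Matrix.sub_mul, Matrix.mul_smul, Matrix.smul_mul,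
    Matrix.mul_smul, Matrix.smul_mul, Matrix.mul_one]
end
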